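/- (Concavity blow-up lemma) There is no twice continuously differentiable function f : [t₀, ∞) → ℝ such that f(t) > 0, f′(t) > 0, and f(t)·f″(t) − (3/2)·f′(t)² ≥ 0 for all t ≥ t₀. Equivalently, if a C² function f satisfies f > 0, f′ > 0 and f·f″ ≥ (3/2)(f′)² on its maximal interval of definition [t₀, T), then T < ∞. -/
import Mathlib


/-- Concavity blow-up lemma: there is no `C²` function `f` on `[t₀, ∞)` with
`f > 0`, `f′ > 0` and `f·f″ − (3/2)(f′)² ≥ 0` everywhere on `[t₀, ∞)`. -/
theorem no_global_concavity_function (t₀ : ℝ) (f : ℝ → ℝ)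
    (hf : ContDiffOn ℝ 2 f (Set.Ici t₀))
    (hpos : ∀ t, t₀ ≤ t → 0 < f t)
    (hder : ∀ t, t₀ ≤ t → 0 < derivWithin f (Set.Ici t₀) t)
    (hineq : ∀ t, t₀ ≤ t →
      0 ≤ f t * derivWithin (derivWithin f (Set.Ici t₀)) (Set.Ici t₀) t -
        (3 / 2) * (derivWithin f (Set.Ici t₀) t) ^ 2) :
    False := by
  set s := Set.Ici t₀ with hs
  have hsu : UniqueDiffOn ℝ s := uniqueDiffOn_Ici t₀
  set f' := derivWithin f s with hf'def
  set f'' := derivWithin f' s with hf''def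
  -- f has derivative f' within s
  have hdf : ∀ t ∈ s, HasDerivWithinAt f (f' t) s t := by
    intro t ht
    exact ((hf.differentiableOn (by norm_num)) t ht).hasDerivWithinAt
  -- f' is C¹, hence has derivative f'' within s
  have hf'c : ContDiffOn ℝ 1 f' s := hf.derivWithin hsu (by norm_num)
  have hdf' : ∀ t ∈ s, HasDerivWithinAt f' (f'' t) s t := by
    intro t ht
    exact ((hf'c.differentiableOn (by norm_num)) t ht).hasDerivWithinAt
  -- the function w t = f t / f' t + t/2
  set w : ℝ → ℝ := fun t => f t / f' t + t / 2 with hw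
  have hdw : ∀ t ∈ s, HasDerivWithinAt w
      ((f' t * f' t - f t * f'' t) / f' t ^ 2 + 1 / 2) s t := by
    intro t ht
    exact (((hdf t ht).div (hdf' t ht) (hder t ht).ne')).add
      ((hasDerivWithinAt_id t s).div_const 2)
  have hwd_nonpos : ∀ t ∈ s, (f' t * f' t - f t * f'' t) / f' t ^ 2 + 1 / 2 ≤ 0 := by
    intro t ht
    have h1 := hineq t ht
    have h2 : (0:ℝ) < f' t ^ 2 := pow_pos (hder t ht) 2
    rw [← le_neg_iff_add_nonpos_right, div_le_iff₀ h2]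
    nlinarith
  -- w is antitone on s
  have hanti : AntitoneOn w s := by
    refine antitoneOn_of_hasDerivWithinAt_nonpos (f' := fun t => (f' t * f' t - f t * f'' t) / f' t ^ 2 + 1 / 2) (convex_Ici t₀) ?_ ?_ ?_
    · intro t ht
      exact (hdw t ht).continuousWithinAt
    · intro t ht
      exact (hdw t (interior_subset ht)).mono interior_subset
    · intro t ht
      exact hwd_nonpos t (interior_subset ht)
  -- contradiction at t₁ = t₀ + 2 * (f t₀ / f' t₀)
  have hz0 : 0 < f t₀ / f' t₀ := div_pos (hpos t₀ le_rfl) (hder t₀ le_rfl)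
  set t₁ := t₀ + 2 * (f t₀ / f' t₀) with ht₁
  have ht₁s : t₀ ≤ t₁ := by rw [ht₁]; linarith
  have hz1 : 0 < f t₁ / f' t₁ := div_pos (hpos t₁ ht₁s) (hder t₁ ht₁s)
  have h := hanti (Set.self_mem_Ici) (Set.mem_Ici.mpr ht₁s) ht₁s
  simp only [hw] at h
  linarith [h, hz1, ht₁]
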